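/- arXiv:0804.2059 — 8 statements merged into one kernel-verified Lean document; each statement's English description precedes it below -/
import Mathlib

section
/- Let s and A be real numbers, let I be an open interval, and let g : ℝ → ℝ be twice differentiable on I with g(t) > 0, g'(t) ≠ 0 and s²/4 + A·g(t)² > 0 for all t ∈ I. Define f(t) = g(t)·g'(t)/√(s²/4 + A·g(t)²). Then for every t ∈ I one has g''(t)/g(t) + s²·f(t)²/(4·g(t)⁴) − f'(t)·g'(t)/(f(t)·g(t)) = 0. -/
/-!
With `R = s²/4 + A g²`, the logarithmic derivative of `f = g g' / √R` is
`g'/g + g''/g' − A g g'/R`. Substituting it, the `g''/g` terms cancel and what remains is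
`g'² (s²/4 + A g² − R) / (g² R) = 0`.
-/

open Real

section

variable {g g' : ℝ → ℝ} {c A t v w : ℝ}

theorem HasDerivAt.sqrt_const_add_mul_sq (hg : HasDerivAt g v t) (hR : 0 < c + A * g t ^ 2) :
    HasDerivAt (fun u => √(c + A * g u ^ 2)) (A * g t * v / √(c + A * g t ^ 2)) t := by
  have hrad : HasDerivAt (fun u => c + A * g u ^ 2) (A * (2 * g t * v)) t := by
    simpa using ((hg.pow 2).const_mul A).const_add c
  convert hrad.sqrt hR.ne' using 1
  field_simp

theorem hasDerivAt_mul_div_sqrt_const_add_mul_sq (hg : HasDerivAt g v t)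
    (hg' : HasDerivAt g' w t) (hgt : g t ≠ 0) (hg't : g' t ≠ 0) (hR : 0 < c + A * g t ^ 2) :
    HasDerivAt (fun u => g u * g' u / √(c + A * g u ^ 2))
      (g t * g' t / √(c + A * g t ^ 2) *
        (v / g t + w / g' t - A * g t * v / (c + A * g t ^ 2))) t := by
  have hq := (sqrt_pos.mpr hR).ne'
  have hq2 := sq_sqrt hR.le
  refine ((hg.mul hg').div (hg.sqrt_const_add_mul_sq hR) hq).congr_deriv ?_
  generalize √(c + A * g t ^ 2) = q at hq hq2 ⊢
  rw [Pi.mul_apply, ← hq2]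
  field_simp

end

/-- Section 6: the choice `f = g g' / √(s²/4 + A g²)` solves the ODE
`g''/g + s² f²/(4 g⁴) − f' g'/(f g) = 0` on an open interval. -/
theorem stmt_0 (s A a b : ℝ) (g g' g'' : ℝ → ℝ)
    (hg : ∀ t ∈ Set.Ioo a b, HasDerivAt g (g' t) t)
    (hg' : ∀ t ∈ Set.Ioo a b, HasDerivAt g' (g'' t) t)
    (hgpos : ∀ t ∈ Set.Ioo a b, 0 < g t)
    (hg'ne : ∀ t ∈ Set.Ioo a b, g' t ≠ 0)
    (hrad : ∀ t ∈ Set.Ioo a b, 0 < s ^ 2 / 4 + A * g t ^ 2)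
    (f : ℝ → ℝ)
    (hf : ∀ t : ℝ, f t = g t * g' t / Real.sqrt (s ^ 2 / 4 + A * g t ^ 2)) :
    ∀ t ∈ Set.Ioo a b,
      g'' t / g t + s ^ 2 * f t ^ 2 / (4 * g t ^ 4)
        - deriv f t * g' t / (f t * g t) = 0 := by
  intro t ht
  have hgt : g t ≠ 0 := (hgpos t ht).ne'
  have hg't := hg'ne t ht
  have hR := hrad t ht
  have hf' := hasDerivAt_mul_div_sqrt_const_add_mul_sq (hg t ht) (hg' t ht) hgt hg't hR
  rw [← funext hf] at hf'
  have hq2 := sq_sqrt hR.le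
  have hq := (sqrt_pos.mpr hR).ne'
  rw [hf'.deriv, hf t]
  generalize √(s ^ 2 / 4 + A * g t ^ 2) = q at hq hq2 ⊢
  rw [← hq2]
  field_simp
  linear_combination -4 * g' t ^ 2 * hq2
end

section
/- Let n ≥ 1 be a natural number, A a nonzero real number, and y > 0 a real number with y ≠ 1. Define C(x) = 2A(nx² − y + x²y − ny²)/(n(1−x²)(x²−y²)(1−y²)). If 0 < y < 1 then C is strictly monotone (hence injective) on the interval (y, 1); if y > 1 then C is strictly monotone (hence injective) on the interval (1, y). -/
private lemma key_ineq (n y a b : ℝ) (hn : 1 ≤ n) (hy : 0 < y)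
    (h2 : 0 < (1 - a ^ 2) * (1 - b ^ 2)) (h3 : 0 < (a ^ 2 - y ^ 2) * (b ^ 2 - y ^ 2))
    (hab : a ^ 2 < b ^ 2) :
    (n * a ^ 2 - y + a ^ 2 * y - n * y ^ 2) * ((1 - b ^ 2) * (b ^ 2 - y ^ 2)) <
      (n * b ^ 2 - y + b ^ 2 * y - n * y ^ 2) * ((1 - a ^ 2) * (a ^ 2 - y ^ 2)) := by
  have hnpos : (0 : ℝ) < n := lt_of_lt_of_le one_pos hn
  have hQ : 0 < y * ((1 - a ^ 2) * (1 - b ^ 2)) + n * ((a ^ 2 - y ^ 2) * (b ^ 2 - y ^ 2)) :=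
    add_pos (mul_pos hy h2) (mul_pos hnpos h3)
  nlinarith [mul_pos (sub_pos.mpr hab) hQ]

private lemma main_ineq (n A y a b : ℝ) (hn : 1 ≤ n) (hy : 0 < y)
    (h1a : 0 < (1 - a ^ 2) * (a ^ 2 - y ^ 2)) (h1b : 0 < (1 - b ^ 2) * (b ^ 2 - y ^ 2))
    (h2 : 0 < (1 - a ^ 2) * (1 - b ^ 2)) (h3 : 0 < (a ^ 2 - y ^ 2) * (b ^ 2 - y ^ 2))
    (hab : a ^ 2 < b ^ 2) (hc : 0 < A * (1 - y ^ 2)) :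
    2 * A * (n * a ^ 2 - y + a ^ 2 * y - n * y ^ 2)
        / (n * (1 - a ^ 2) * (a ^ 2 - y ^ 2) * (1 - y ^ 2)) <
      2 * A * (n * b ^ 2 - y + b ^ 2 * y - n * y ^ 2)
        / (n * (1 - b ^ 2) * (b ^ 2 - y ^ 2) * (1 - y ^ 2)) := by
  have hnpos : (0 : ℝ) < n := lt_of_lt_of_le one_pos hn
  have hy2 : (1 - y ^ 2) ≠ 0 := by
    intro h; rw [h, mul_zero] at hc; exact lt_irrefl 0 hc
  have hDa : n * (1 - a ^ 2) * (a ^ 2 - y ^ 2) * (1 - y ^ 2) ≠ 0 := by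
    have : (1 - a ^ 2) * (a ^ 2 - y ^ 2) ≠ 0 := ne_of_gt h1a
    have h1 : (1 - a ^ 2) ≠ 0 := left_ne_zero_of_mul this
    have h2' : (a ^ 2 - y ^ 2) ≠ 0 := right_ne_zero_of_mul this
    exact mul_ne_zero (mul_ne_zero (mul_ne_zero (ne_of_gt hnpos) h1) h2') hy2
  have hDb : n * (1 - b ^ 2) * (b ^ 2 - y ^ 2) * (1 - y ^ 2) ≠ 0 := by
    have : (1 - b ^ 2) * (b ^ 2 - y ^ 2) ≠ 0 := ne_of_gt h1b
    have h1 : (1 - b ^ 2) ≠ 0 := left_ne_zero_of_mul this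
    have h2' : (b ^ 2 - y ^ 2) ≠ 0 := right_ne_zero_of_mul this
    exact mul_ne_zero (mul_ne_zero (mul_ne_zero (ne_of_gt hnpos) h1) h2') hy2
  rw [← sub_pos, div_sub_div _ _ hDb hDa]
  apply div_pos
  · have hk := key_ineq n y a b hn hy h2 h3 hab
    have hc2 : 0 < 2 * (A * (1 - y ^ 2)) * n := by positivity
    nlinarith [mul_pos hc2 (sub_pos.mpr hk)]
  · have hsq : 0 < (1 - y ^ 2) ^ 2 :=
      lt_of_le_of_ne (sq_nonneg _) (Ne.symm (pow_ne_zero 2 hy2))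
    nlinarith [mul_pos (mul_pos (mul_pos (mul_pos hnpos hnpos) hsq) h1a) h1b]

set_option maxHeartbeats 1000000 in
/-- Section 7: strict monotonicity of `x ↦ C(x,y)` on the interval between `y`
and `1`, key to showing `F'` has at most one zero there. -/
theorem stmt_6 (n : ℕ) (hn : 1 ≤ n) (A : ℝ) (hA : A ≠ 0) (y : ℝ) (hy : 0 < y)
    (hy1 : y ≠ 1) (C : ℝ → ℝ)
    (hC : ∀ x : ℝ, C x =
      2 * A * ((n : ℝ) * x ^ 2 - y + x ^ 2 * y - (n : ℝ) * y ^ 2)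
        / ((n : ℝ) * (1 - x ^ 2) * (x ^ 2 - y ^ 2) * (1 - y ^ 2))) :
    (y < 1 → StrictMonoOn C (Set.Ioo y 1) ∨ StrictAntiOn C (Set.Ioo y 1)) ∧
    (1 < y → StrictMonoOn C (Set.Ioo 1 y) ∨ StrictAntiOn C (Set.Ioo 1 y)) := by
  have hn' : (1 : ℝ) ≤ (n : ℝ) := by exact_mod_cast hn
  constructor
  · intro hylt
    have hy2 : 0 < 1 - y ^ 2 := by nlinarith
    rcases lt_or_gt_of_ne hA with hAneg | hApos
    · right
      intro a ha b hb hab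
      obtain ⟨ha1, ha2⟩ := ha
      obtain ⟨hb1, hb2⟩ := hb
      have pa1 : 0 < 1 - a ^ 2 := by nlinarith
      have pa2 : 0 < a ^ 2 - y ^ 2 := by nlinarith
      have pb1 : 0 < 1 - b ^ 2 := by nlinarith
      have pb2 : 0 < b ^ 2 - y ^ 2 := by nlinarith
      have h := main_ineq (n : ℝ) (-A) y a b hn' hy
        (mul_pos pa1 pa2) (mul_pos pb1 pb2) (mul_pos pa1 pb1) (mul_pos pa2 pb2)
        (pow_lt_pow_left₀ hab (by linarith) two_ne_zero) (mul_pos (neg_pos.mpr hAneg) hy2)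
      rw [hC a, hC b]
      have e1 : 2 * (-A) * ((n : ℝ) * a ^ 2 - y + a ^ 2 * y - (n : ℝ) * y ^ 2)
          / ((n : ℝ) * (1 - a ^ 2) * (a ^ 2 - y ^ 2) * (1 - y ^ 2))
          = -(2 * A * ((n : ℝ) * a ^ 2 - y + a ^ 2 * y - (n : ℝ) * y ^ 2)
          / ((n : ℝ) * (1 - a ^ 2) * (a ^ 2 - y ^ 2) * (1 - y ^ 2))) := by ring
      have e2 : 2 * (-A) * ((n : ℝ) * b ^ 2 - y + b ^ 2 * y - (n : ℝ) * y ^ 2)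
          / ((n : ℝ) * (1 - b ^ 2) * (b ^ 2 - y ^ 2) * (1 - y ^ 2))
          = -(2 * A * ((n : ℝ) * b ^ 2 - y + b ^ 2 * y - (n : ℝ) * y ^ 2)
          / ((n : ℝ) * (1 - b ^ 2) * (b ^ 2 - y ^ 2) * (1 - y ^ 2))) := by ring
      rw [e1, e2] at h
      linarith
    · left
      intro a ha b hb hab
      obtain ⟨ha1, ha2⟩ := ha
      obtain ⟨hb1, hb2⟩ := hb
      have pa1 : 0 < 1 - a ^ 2 := by nlinarith
      have pa2 : 0 < a ^ 2 - y ^ 2 := by nlinarith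
      have pb1 : 0 < 1 - b ^ 2 := by nlinarith
      have pb2 : 0 < b ^ 2 - y ^ 2 := by nlinarith
      have h := main_ineq (n : ℝ) A y a b hn' hy
        (mul_pos pa1 pa2) (mul_pos pb1 pb2) (mul_pos pa1 pb1) (mul_pos pa2 pb2)
        (pow_lt_pow_left₀ hab (by linarith) two_ne_zero) (mul_pos hApos hy2)
      rw [hC a, hC b]
      exact h
  · intro hylt
    have hy2 : 1 - y ^ 2 < 0 := by nlinarith
    rcases lt_or_gt_of_ne hA with hAneg | hApos
    · left
      intro a ha b hb hab
      obtain ⟨ha1, ha2⟩ := ha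
      obtain ⟨hb1, hb2⟩ := hb
      have pa1 : 1 - a ^ 2 < 0 := by nlinarith
      have pa2 : a ^ 2 - y ^ 2 < 0 := by nlinarith
      have pb1 : 1 - b ^ 2 < 0 := by nlinarith
      have pb2 : b ^ 2 - y ^ 2 < 0 := by nlinarith
      have h := main_ineq (n : ℝ) A y a b hn' hy
        (mul_pos_of_neg_of_neg pa1 pa2) (mul_pos_of_neg_of_neg pb1 pb2)
        (mul_pos_of_neg_of_neg pa1 pb1) (mul_pos_of_neg_of_neg pa2 pb2)
        (pow_lt_pow_left₀ hab (by linarith) two_ne_zero) (mul_pos_of_neg_of_neg hAneg hy2)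
      rw [hC a, hC b]
      exact h
    · right
      intro a ha b hb hab
      obtain ⟨ha1, ha2⟩ := ha
      obtain ⟨hb1, hb2⟩ := hb
      have pa1 : 1 - a ^ 2 < 0 := by nlinarith
      have pa2 : a ^ 2 - y ^ 2 < 0 := by nlinarith
      have pb1 : 1 - b ^ 2 < 0 := by nlinarith
      have pb2 : b ^ 2 - y ^ 2 < 0 := by nlinarith
      have h := main_ineq (n : ℝ) (-A) y a b hn' hy
        (mul_pos_of_neg_of_neg pa1 pa2) (mul_pos_of_neg_of_neg pb1 pb2)
        (mul_pos_of_neg_of_neg pa1 pb1) (mul_pos_of_neg_of_neg pa2 pb2)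
        (pow_lt_pow_left₀ hab (by linarith) two_ne_zero) (mul_pos_of_neg_of_neg (neg_neg_of_pos hApos) hy2)
      rw [hC a, hC b]
      have e1 : 2 * (-A) * ((n : ℝ) * a ^ 2 - y + a ^ 2 * y - (n : ℝ) * y ^ 2)
          / ((n : ℝ) * (1 - a ^ 2) * (a ^ 2 - y ^ 2) * (1 - y ^ 2))
          = -(2 * A * ((n : ℝ) * a ^ 2 - y + a ^ 2 * y - (n : ℝ) * y ^ 2)
          / ((n : ℝ) * (1 - a ^ 2) * (a ^ 2 - y ^ 2) * (1 - y ^ 2))) := by ring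
      have e2 : 2 * (-A) * ((n : ℝ) * b ^ 2 - y + b ^ 2 * y - (n : ℝ) * y ^ 2)
          / ((n : ℝ) * (1 - b ^ 2) * (b ^ 2 - y ^ 2) * (1 - y ^ 2))
          = -(2 * A * ((n : ℝ) * b ^ 2 - y + b ^ 2 * y - (n : ℝ) * y ^ 2)
          / ((n : ℝ) * (1 - b ^ 2) * (b ^ 2 - y ^ 2) * (1 - y ^ 2))) := by ring
      rw [e1, e2] at h
      linarith
end

section
/- Let n ≥ 1 be a natural number. Then for every real number c > 1 one has (n+1)(c^{2n+4} − c²) > n(c^{2n+2} − c⁴). -/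
/-- Section 7 (case A = 0): `(n+1)(c^{2n+4} − c²) > n(c^{2n+2} − c⁴)` for `c > 1`. -/
theorem stmt_11 (n : ℕ) (hn : 1 ≤ n) :
    ∀ c : ℝ, 1 < c →
      ((n : ℝ) + 1) * (c ^ (2 * n + 4) - c ^ 2) > (n : ℝ) * (c ^ (2 * n + 2) - c ^ 4) := by
  intro c hc
  have hc1 : (1:ℝ) ≤ c := hc.le
  have h1 : c ^ (2*n+2) < c ^ (2*n+4) := pow_lt_pow_right₀ hc (by omega)
  have h2 : c ^ 2 < c ^ 4 := pow_lt_pow_right₀ hc (by omega)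
  have h3 : c ^ 4 ≤ c ^ (2*n+2) := pow_le_pow_right₀ hc1 (by omega)
  have hN : (0:ℝ) ≤ (n:ℝ) := Nat.cast_nonneg n
  nlinarith [mul_le_mul_of_nonneg_left h1.le hN, mul_le_mul_of_nonneg_left h2.le hN]
end

section
/- Let n ≥ 2 be a natural number. Then for every real number c > 1 one has 2n(c^{2n+6} + 1) + 4(n+1)(c^{2n+4} + c²) > (6n+4)(c⁴ + c²). -/
/-- Section 7 (case A = 0): `2n(c^{2n+6} + 1) + 4(n+1)(c^{2n+4} + c²) > (6n+4)(c⁴ + c²)`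
for `c > 1`. -/
theorem stmt_12 (n : ℕ) (hn : 2 ≤ n) :
    ∀ c : ℝ, 1 < c →
      2 * (n : ℝ) * (c ^ (2 * n + 6) + 1) + 4 * ((n : ℝ) + 1) * (c ^ (2 * n + 4) + c ^ 2)
        > (6 * (n : ℝ) + 4) * (c ^ 4 + c ^ 2) := by
  intro c hc
  have h1 : (c : ℝ) ^ 6 ≤ c ^ (2 * n + 6) := pow_le_pow_right₀ hc.le (by omega)
  have h2 : (c : ℝ) ^ 4 ≤ c ^ (2 * n + 4) := pow_le_pow_right₀ hc.le (by omega)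
  have hn' : (2 : ℝ) ≤ n := by exact_mod_cast hn
  have hq : (0 : ℝ) < (c ^ 2 - 1) * (c ^ 4 - 1) := by
    have : (1 : ℝ) < c ^ 2 := one_lt_pow₀ hc (by norm_num)
    have h4 : (1 : ℝ) < c ^ 4 := one_lt_pow₀ hc (by norm_num)
    nlinarith
  nlinarith [hq, sq_nonneg c, mul_le_mul_of_nonneg_left h1 (by linarith : (0:ℝ) ≤ 2 * n),
    mul_le_mul_of_nonneg_left h2 (by linarith : (0:ℝ) ≤ 4 * ((n:ℝ)+1))]
end

section
/- Let n ≥ 2 be a natural number, s > 0 a real number, and ε ∈ {−1, 0, 1}. Define φ(c) = −n(s−2ε)c^{2n+6} + (4ε(n+1) − n(n+1)s)c^{2n+4} − ((6n+4)ε − n²s)c^{2n+2} − ((6n+4)ε + n²s)c⁴ + (4ε(n+1) + n(n+1)s)c² + n(s+2ε). Then there exists a real number c > 1 with φ(c) = 0 if and only if ε = 1 and s < 2. -/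
/-!
Put `u = c²` and `y = c^(2n+2)`. Then `φ(c) = n s F(u, y) + ε G(u, y)` for two polynomials
`F = sCoeff n` and `G = εCoeff n` such that, for `c > 1`, `F < 0`, `G > 0` and (as `n ≥ 2`) `2nF + G < 0`.
Hence `φ(c) < 0` when `ε ≤ 0`, and also when `0 < ε` and `2ε ≤ s`, by writing
`φ = (s - 2ε) n F + ε (2nF + G)`.
Conversely, for `ε = 1` and `s < 2`, `φ(1) = 0`, `φ'(1) = -8n(n+1)s < 0` and the leading
coefficient `n(2 - s)` is positive, so `φ` changes sign on `(1, ∞)`.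
-/

open Filter

namespace KaehlerGray

theorem exists_gt_lt_of_hasDerivAt_neg {f : ℝ → ℝ} {f' a : ℝ} (hf : HasDerivAt f f' a)
    (hf' : f' < 0) : ∃ b, a < b ∧ f b < f a := by
  obtain ⟨b, hslope, hab⟩ :=
    (hf.hasDerivWithinAt.liminf_right_slope_le hf').and_eventually self_mem_nhdsWithin |>.exists
  have hab' : 0 < b - a := sub_pos.2 hab
  rw [slope_def_field, div_neg_iff] at hslope
  exact ⟨b, hab, by rcases hslope with h | h <;> linarith [h.1, h.2]⟩

theorem sq_sq_le_pow_two_mul_add_two {n : ℕ} {c : ℝ} (hn : 0 < n) (hc : 1 ≤ c) :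
    (c ^ 2) ^ 2 ≤ c ^ (2 * n + 2) := by
  rw [← pow_mul]
  exact pow_le_pow_right₀ hc (by omega)

def phi (n : ℕ) (s ε c : ℝ) : ℝ :=
  -((n : ℝ) * (s - 2 * ε)) * c ^ (2 * n + 6)
    + (4 * ε * ((n : ℝ) + 1) - (n : ℝ) * ((n : ℝ) + 1) * s) * c ^ (2 * n + 4)
    - ((6 * (n : ℝ) + 4) * ε - (n : ℝ) ^ 2 * s) * c ^ (2 * n + 2)
    - ((6 * (n : ℝ) + 4) * ε + (n : ℝ) ^ 2 * s) * c ^ 4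
    + (4 * ε * ((n : ℝ) + 1) + (n : ℝ) * ((n : ℝ) + 1) * s) * c ^ 2
    + (n : ℝ) * (s + 2 * ε)

def sCoeff (N u y : ℝ) : ℝ :=
  -(y * u ^ 2) - (N + 1) * (y * u) + N * y - N * u ^ 2 + (N + 1) * u + 1

def εCoeff (N u y : ℝ) : ℝ :=
  2 * N * (y * u ^ 2) + 4 * (N + 1) * (y * u) - (6 * N + 4) * y - (6 * N + 4) * u ^ 2
    + 4 * (N + 1) * u + 2 * N

section Coefficients

variable {N s u y : ℝ}

theorem sCoeff_neg (hN : 0 ≤ N) (hu : 1 < u) (hy : 1 ≤ y) : sCoeff N u y < 0 := by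
  have key : sCoeff N u y =
      -((y - 1) * (u ^ 2 + u + N * (u - 1))) - (N + 1) * (u - 1) * (u + 1) := by
    unfold sCoeff; ring
  have hu1 : 0 < u - 1 := by linarith
  rw [key]
  linarith [mul_nonneg (by linarith : 0 ≤ y - 1) (by positivity : 0 ≤ u ^ 2 + u + N * (u - 1)),
    mul_pos (mul_pos (by linarith : 0 < N + 1) hu1) (by linarith : 0 < u + 1)]

theorem εCoeff_pos (hN : 0 ≤ N) (hu : 1 < u) (hy : u ^ 2 ≤ y) : 0 < εCoeff N u y := by
  have key : εCoeff N u y = (y - u ^ 2) * (2 * N * (u ^ 2 - 1) + 4 * (N + 1) * (u - 1))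
      + (u - 1) ^ 2 * (2 * N * (u ^ 2 + 1) + (8 * N + 4) * u) := by
    unfold εCoeff; ring
  have hu1 : 0 < u - 1 := by linarith
  have hy' : 0 ≤ y - u ^ 2 := by linarith
  have hu2 : 0 ≤ u ^ 2 - 1 := by nlinarith
  rw [key]
  positivity

theorem two_mul_sCoeff_add_εCoeff_neg (hN : 2 ≤ N) (hu : 1 < u) (hy : 1 ≤ y) :
    2 * N * sCoeff N u y + εCoeff N u y < 0 := by
  have key : 2 * N * sCoeff N u y + εCoeff N u y = -(4 * N * (y - 1))
      - 2 * (N + 1) * (N - 2) * (u - 1) * y - 2 * (N + 1) * (N + 2) * u * (u - 1) := by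
    unfold sCoeff εCoeff; ring
  have hu1 : 0 < u - 1 := by linarith
  have hN2 : 0 ≤ N - 2 := by linarith
  rw [key]
  linarith [mul_nonneg (by positivity : 0 ≤ 4 * N) (by linarith : 0 ≤ y - 1),
    mul_nonneg (mul_nonneg (mul_nonneg (by positivity : (0 : ℝ) ≤ 2 * (N + 1)) hN2) hu1.le)
      (by positivity : 0 ≤ y),
    mul_pos (mul_pos (by positivity : (0 : ℝ) < 2 * (N + 1) * (N + 2)) (by positivity : 0 < u)) hu1]

theorem le_mul_sCoeff_add_εCoeff (hN : 0 ≤ N) (hs : 0 ≤ s) (hs2 : s ≤ 2) (hu : 1 ≤ u)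
    (hy : u ^ 2 ≤ y) :
    y * u * (N * (2 - s) * u - (2 * N ^ 2 + 10 * N + 4)) ≤ N * s * sCoeff N u y + εCoeff N u y := by
  have key : N * s * sCoeff N u y + εCoeff N u y
        - y * u * (N * (2 - s) * u - (2 * N ^ 2 + 10 * N + 4))
      = N * (N + 1) * (2 - s) * (y * u) + (6 * N + 4) * (y * u - y)
        + (6 * N + 4) * (y * u - u ^ 2) + N ^ 2 * s * (y - u ^ 2) + (N + 1) * (N * s + 4) * u
        + N * (s + 2) := by
    unfold sCoeff εCoeff; ring
  have hy' : 0 ≤ y - u ^ 2 := by linarith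
  have hy1 : 1 ≤ y := by nlinarith
  have hyu : 0 ≤ y * u - y := by nlinarith
  have hyu' : 0 ≤ y * u - u ^ 2 := by nlinarith
  have hs' : 0 ≤ 2 - s := by linarith
  have hu0 : 0 ≤ u := by linarith
  have hy0 : 0 ≤ y := by linarith
  rw [← sub_nonneg, key]
  positivity

end Coefficients

section Phi

variable (n : ℕ) (s ε : ℝ)

theorem phi_eq (c : ℝ) :
    phi n s ε c = n * s * sCoeff n (c ^ 2) (c ^ (2 * n + 2))
      + ε * εCoeff n (c ^ 2) (c ^ (2 * n + 2)) := by
  unfold phi sCoeff εCoeff; ring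

theorem phi_one : phi n s ε 1 = 0 := by
  simp only [phi, one_pow]; ring

theorem continuous_phi : Continuous (phi n s ε) := by
  unfold phi; fun_prop

theorem hasDerivAt_phi_one : HasDerivAt (phi n s ε) (-(8 * n * (n + 1) * s)) 1 := by
  have h := (((((((hasDerivAt_pow (2 * n + 6) (1 : ℝ)).const_mul (-((n : ℝ) * (s - 2 * ε)))).add
    ((hasDerivAt_pow (2 * n + 4) (1 : ℝ)).const_mul
      (4 * ε * ((n : ℝ) + 1) - (n : ℝ) * ((n : ℝ) + 1) * s))).sub
    ((hasDerivAt_pow (2 * n + 2) (1 : ℝ)).const_mul ((6 * (n : ℝ) + 4) * ε - (n : ℝ) ^ 2 * s))).sub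
    ((hasDerivAt_pow 4 (1 : ℝ)).const_mul ((6 * (n : ℝ) + 4) * ε + (n : ℝ) ^ 2 * s))).add
    ((hasDerivAt_pow 2 (1 : ℝ)).const_mul
      (4 * ε * ((n : ℝ) + 1) + (n : ℝ) * ((n : ℝ) + 1) * s))).add_const
    ((n : ℝ) * (s + 2 * ε)))
  refine h.congr_deriv ?_
  simp only [one_pow, mul_one]
  push_cast
  ring

variable {n s ε} {c : ℝ}

theorem phi_neg_of_nonpos (hn : 0 < n) (hs : 0 < s) (hε : ε ≤ 0) (hc : 1 < c) :
    phi n s ε c < 0 := by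
  have hu : 1 < c ^ 2 := one_lt_pow₀ hc two_ne_zero
  have hy := sq_sq_le_pow_two_mul_add_two hn hc.le
  have hF := sCoeff_neg (n.cast_nonneg' : (0 : ℝ) ≤ n) hu (by nlinarith)
  have hG := εCoeff_pos (n.cast_nonneg' : (0 : ℝ) ≤ n) hu hy
  have hns : (0 : ℝ) < n * s := mul_pos (by exact_mod_cast hn) hs
  rw [phi_eq]
  linarith [mul_neg_of_pos_of_neg hns hF, mul_nonpos_of_nonpos_of_nonneg hε hG.le]

theorem phi_neg_of_two_mul_le (hn : 2 ≤ n) (hε : 0 < ε) (hεs : 2 * ε ≤ s) (hc : 1 < c) :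
    phi n s ε c < 0 := by
  have hN : (2 : ℝ) ≤ n := by exact_mod_cast hn
  have hu : 1 < c ^ 2 := one_lt_pow₀ hc two_ne_zero
  have hy : 1 ≤ c ^ (2 * n + 2) := one_le_pow₀ hc.le
  have hF := sCoeff_neg (N := n) (by linarith) hu hy
  have hsum := two_mul_sCoeff_add_εCoeff_neg hN hu hy
  have key : phi n s ε c = (s - 2 * ε) * n * sCoeff n (c ^ 2) (c ^ (2 * n + 2))
      + ε * (2 * n * sCoeff n (c ^ 2) (c ^ (2 * n + 2)) + εCoeff n (c ^ 2) (c ^ (2 * n + 2))) := by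
    rw [phi_eq]; ring
  rw [key]
  linarith [mul_nonpos_of_nonneg_of_nonpos (mul_nonneg (sub_nonneg.2 hεs) (by linarith : (0 : ℝ) ≤ n))
    hF.le, mul_neg_of_pos_of_neg hε hsum]

theorem exists_le_phi_pos (hn : 0 < n) (hs : 0 < s) (hs2 : s < 2) (a : ℝ) :
    ∃ b, a ≤ b ∧ 0 < phi n s 1 b := by
  have hk : 0 < (n : ℝ) * (2 - s) := mul_pos (by exact_mod_cast hn) (by linarith)
  obtain ⟨b, hab, hb1, hKb⟩ := ((eventually_ge_atTop a).and ((eventually_ge_atTop 1).and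
    ((tendsto_id.const_mul_atTop hk).eventually_gt_atTop (2 * (n : ℝ) ^ 2 + 10 * n + 4)))).exists
  have hKb2 : 2 * (n : ℝ) ^ 2 + 10 * n + 4 < n * (2 - s) * b ^ 2 :=
    hKb.trans_le (mul_le_mul_of_nonneg_left (le_self_pow₀ hb1 two_ne_zero) hk.le)
  have hlow := le_mul_sCoeff_add_εCoeff (n.cast_nonneg' : (0 : ℝ) ≤ n) hs.le hs2.le
    (one_le_pow₀ hb1) (sq_sq_le_pow_two_mul_add_two hn hb1)
  refine ⟨b, hab, ?_⟩
  rw [phi_eq, one_mul]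
  refine lt_of_lt_of_le ?_ hlow
  have := sub_pos.2 hKb2
  have : 0 < b := by linarith
  positivity

end Phi

end KaehlerGray

open KaehlerGray in
/-- Section 7 (case A = 0): `φ` has a root `c > 1` iff `ε = 1` and `s < 2`. -/
theorem stmt_13 (n : ℕ) (hn : 2 ≤ n) (s : ℝ) (hs : 0 < s) (ε : ℝ)
    (hε : ε ∈ ({-1, 0, 1} : Set ℝ)) (φ : ℝ → ℝ)
    (hφ : ∀ c : ℝ, φ c =
      -((n : ℝ) * (s - 2 * ε)) * c ^ (2 * n + 6)
        + (4 * ε * ((n : ℝ) + 1) - (n : ℝ) * ((n : ℝ) + 1) * s) * c ^ (2 * n + 4)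
        - ((6 * (n : ℝ) + 4) * ε - (n : ℝ) ^ 2 * s) * c ^ (2 * n + 2)
        - ((6 * (n : ℝ) + 4) * ε + (n : ℝ) ^ 2 * s) * c ^ 4
        + (4 * ε * ((n : ℝ) + 1) + (n : ℝ) * ((n : ℝ) + 1) * s) * c ^ 2
        + (n : ℝ) * (s + 2 * ε)) :
    (∃ c : ℝ, 1 < c ∧ φ c = 0) ↔ (ε = 1 ∧ s < 2) := by
  obtain rfl : φ = phi n s ε := funext hφ
  have hn0 : 0 < n := by omega
  constructor
  · rintro ⟨c, hc, hroot⟩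
    rcases hε with rfl | rfl | rfl
    · exact absurd hroot (phi_neg_of_nonpos hn0 hs (by norm_num) hc).ne
    · exact absurd hroot (phi_neg_of_nonpos hn0 hs le_rfl hc).ne
    · exact ⟨rfl, not_le.1 fun h2 => (phi_neg_of_two_mul_le hn one_pos (by linarith) hc).ne hroot⟩
  · rintro ⟨rfl, hs2⟩
    obtain ⟨a, ha1, ha⟩ := exists_gt_lt_of_hasDerivAt_neg (hasDerivAt_phi_one n s 1)
      (neg_neg_of_pos (by positivity))
    obtain ⟨b, hab, hb⟩ := exists_le_phi_pos hn0 hs hs2 a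
    rw [phi_one] at ha
    obtain ⟨c, hc, hroot⟩ :=
      intermediate_value_Icc hab (continuous_phi n s 1).continuousOn ⟨ha.le, hb.le⟩
    exact ⟨c, ha1.trans_le hc.1, hroot⟩
end

section
/- Let n ≥ 2 be a natural number and define Q(c) = c·((c^{2n+1} − 1)(2n−1) + (1 − c + c²)(1 − c^{2n−1})(2n+1)). Then Q(1) = 0, Q'(1) = 0, Q''(1) = 0, and Q'''(1) = 2(1+2n)(2n² − 7n + 3). -/
lemma hd_aux (a0 a1 a2 a3 a4 a5 a6 : ℝ) (p : ℕ) (x : ℝ) :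
    HasDerivAt (fun c : ℝ => a0*c^(p+3)+a1*c^(p+2)+a2*c^(p+1)+a3*c^3+a4*c^2+a5*c+a6)
      (a0*((p:ℝ)+3)*x^(p+2)+a1*((p:ℝ)+2)*x^(p+1)+a2*((p:ℝ)+1)*x^p+a3*3*x^2+a4*2*x+a5) x := by
  have h : HasDerivAt (fun c : ℝ => a0*c^(p+3)+a1*c^(p+2)+a2*c^(p+1)+a3*c^3+a4*c^2+a5*c+a6)
      (a0*(↑(p+3)*x^(p+3-1))+a1*(↑(p+2)*x^(p+2-1))+a2*(↑(p+1)*x^(p+1-1))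
        +a3*((3:ℕ)*x^(3-1))+a4*((2:ℕ)*x^(2-1))+a5*1) x :=
    (((((((hasDerivAt_pow (p+3) x).const_mul a0).add
      ((hasDerivAt_pow (p+2) x).const_mul a1)).add
      ((hasDerivAt_pow (p+1) x).const_mul a2)).add
      ((hasDerivAt_pow 3 x).const_mul a3)).add
      ((hasDerivAt_pow 2 x).const_mul a4)).add
      ((hasDerivAt_id x).const_mul a5)).add_const a6
  simp only [show p+3-1 = p+2 from by omega, show p+2-1 = p+1 from by omega,
    show p+1-1 = p from by omega] at h
  convert h using 1
  push_cast
  ring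

/-- Case `s = 0`: jet of `Q` at `c = 1`:
`Q(1) = Q'(1) = Q''(1) = 0` and `Q'''(1) = 2(1+2n)(2n² − 7n + 3)`. -/
theorem stmt_16 (n : ℕ) (hn : 2 ≤ n) (Q : ℝ → ℝ)
    (hQ : ∀ c : ℝ, Q c =
      c * ((c ^ (2 * n + 1) - 1) * (2 * (n : ℝ) - 1)
        + (1 - c + c ^ 2) * (1 - c ^ (2 * n - 1)) * (2 * (n : ℝ) + 1))) :
    Q 1 = 0 ∧ deriv Q 1 = 0 ∧ iteratedDeriv 2 Q 1 = 0 ∧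
      iteratedDeriv 3 Q 1 = 2 * (1 + 2 * (n : ℝ)) * (2 * (n : ℝ) ^ 2 - 7 * (n : ℝ) + 3) := by
  obtain ⟨m, rfl⟩ := Nat.exists_eq_add_of_le hn
  set B : ℝ := 2*(m:ℝ)+5 with hB
  -- Q as explicit polynomial
  have hQ0 : Q = fun c : ℝ => (-2)*c^((2*m+3)+3)+B*c^((2*m+3)+2)+(-B)*c^((2*m+3)+1)
      +B*c^3+(-B)*c^2+2*c+0 := by
    funext c
    rw [hQ c, show 2*(2+m)+1 = (2*m+3)+2 from by omega,
      show 2*(2+m)-1 = (2*m)+3 from by omega, hB]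
    push_cast
    ring
  have d1 : deriv Q = fun c : ℝ => (-2*(2*(m:ℝ)+6))*c^((2*m+2)+3)
      +(B*(2*(m:ℝ)+5))*c^((2*m+2)+2)+(-B*(2*(m:ℝ)+4))*c^((2*m+2)+1)
      +0*c^3+(3*B)*c^2+(-2*B)*c+2 := by
    funext x
    rw [hQ0, (hd_aux (-2) B (-B) B (-B) 2 0 (2*m+3) x).deriv]
    push_cast
    ring
  have d2 : deriv (deriv Q) = fun c : ℝ =>
      (-2*(2*(m:ℝ)+6)*(2*(m:ℝ)+5))*c^((2*m+1)+3)
      +(B*(2*(m:ℝ)+5)*(2*(m:ℝ)+4))*c^((2*m+1)+2)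
      +(-B*(2*(m:ℝ)+4)*(2*(m:ℝ)+3))*c^((2*m+1)+1)
      +0*c^3+0*c^2+(6*B)*c+(-2*B) := by
    funext x
    rw [d1, (hd_aux (-2*(2*(m:ℝ)+6)) (B*(2*(m:ℝ)+5)) (-B*(2*(m:ℝ)+4)) 0 (3*B) (-2*B) 2
      (2*m+2) x).deriv]
    push_cast
    ring
  refine ⟨?_, ?_, ?_, ?_⟩
  · rw [hQ0]; push_cast; ring
  · rw [d1]; push_cast; ring
  · rw [show (2:ℕ) = 1+1 from rfl, iteratedDeriv_succ, iteratedDeriv_one, d2]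
    push_cast; ring
  · rw [show (3:ℕ) = 1+1+1 from rfl, iteratedDeriv_succ, iteratedDeriv_succ,
      iteratedDeriv_one, d2,
      (hd_aux (-2*(2*(m:ℝ)+6)*(2*(m:ℝ)+5)) (B*(2*(m:ℝ)+5)*(2*(m:ℝ)+4))
        (-B*(2*(m:ℝ)+4)*(2*(m:ℝ)+3)) 0 0 (6*B) (-2*B) (2*m+1) 1).deriv]
    push_cast; ring
end

section
/- Define Q(c) = c·((c⁷ − 1)·5 + (1 − c + c²)(1 − c⁵)·7) (i.e. the polynomial Q for n = 3). Then Q(c) = −(c−1)⁵·c·(2c² + 3c + 2) for all real c, and consequently Q(c) < 0 for every c > 1. -/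
/-- Case `s = 0`, `n = 3`: `Q(c) = −(c−1)⁵ c (2c² + 3c + 2)`, hence `Q < 0` on `(1,∞)`. -/
theorem stmt_17 (Q : ℝ → ℝ)
    (hQ : ∀ c : ℝ, Q c = c * ((c ^ 7 - 1) * 5 + (1 - c + c ^ 2) * (1 - c ^ 5) * 7)) :
    (∀ c : ℝ, Q c = -((c - 1) ^ 5 * c * (2 * c ^ 2 + 3 * c + 2))) ∧
      ∀ c : ℝ, 1 < c → Q c < 0 := by
  have h : ∀ c : ℝ, Q c = -((c - 1) ^ 5 * c * (2 * c ^ 2 + 3 * c + 2)) := by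
    intro c; rw [hQ]; ring
  refine ⟨h, fun c hc => ?_⟩
  rw [h]
  have h1 : (0:ℝ) < (c - 1) ^ 5 := pow_pos (by linarith) 5
  have h2 : (0:ℝ) < c := by linarith
  have h3 : (0:ℝ) < 2 * c ^ 2 + 3 * c + 2 := by positivity
  nlinarith [mul_pos (mul_pos h1 h2) h3]
end

section
/- Let n ≥ 4 be a natural number and define F(c) = (1+c)(1 − c^{2n+1})(2n−1) + (1+c³)(c^{2n−1} − 1)(2n+1). Then there exists a real number c > 1 with F(c) = 0. -/
/-!
Writing `y = c ^ (2n-1)`, the function is affine in `y`: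
`F c = (2c³ - (2n-1)c² + 2n+1) y + (2n-1)(1+c) - (2n+1)(1+c³)`.
At `c = 2` the coefficient of `y` is `21 - 6n < 0` and the constant term is negative, so `F 2 < 0`
once `n ≥ 4`. At `c = 2n` the coefficient is `(2n+1)(1+c²)` and `y ≥ c`, which makes `F (2n) > 0`.
The intermediate value theorem gives a root in `(2, 2n)`.
-/

noncomputable section

open Set

def grayF (n : ℕ) (c : ℝ) : ℝ :=
  (1 + c) * (1 - c ^ (2 * n + 1)) * (2 * (n : ℝ) - 1)
    + (1 + c ^ 3) * (c ^ (2 * n - 1) - 1) * (2 * (n : ℝ) + 1)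

theorem continuous_grayF (n : ℕ) : Continuous (grayF n) := by
  unfold grayF
  fun_prop

theorem grayF_eq_of_one_le {n : ℕ} (hn : 1 ≤ n) (c : ℝ) :
    grayF n c = (2 * c ^ 3 - (2 * n - 1) * c ^ 2 + (2 * n + 1)) * c ^ (2 * n - 1)
      + (2 * n - 1) * (1 + c) - (2 * n + 1) * (1 + c ^ 3) := by
  have hpow : c ^ (2 * n + 1) = c ^ (2 * n - 1) * c ^ 2 := by
    rw [← pow_add]
    congr 1
    omega
  rw [grayF, hpow]
  ring

theorem grayF_two_neg {n : ℕ} (hn : 4 ≤ n) : grayF n 2 < 0 := by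
  have hn' : (4 : ℝ) ≤ n := by exact_mod_cast hn
  have hy : (0 : ℝ) < 2 ^ (2 * n - 1) := by positivity
  rw [grayF_eq_of_one_le (by omega)]
  nlinarith

theorem grayF_two_mul_pos {n : ℕ} (hn : 1 ≤ n) : 0 < grayF n (2 * n) := by
  have hn' : (1 : ℝ) ≤ n := by exact_mod_cast hn
  have hy : (2 * n : ℝ) ≤ (2 * n) ^ (2 * n - 1) :=
    le_self_pow₀ (by linarith) (by omega)
  have hcoeff : 2 * (2 * n : ℝ) ^ 3 - (2 * n - 1) * (2 * n) ^ 2 + (2 * n + 1)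
      = (2 * n + 1) * (1 + (2 * n) ^ 2) := by ring
  have hcoeff_nonneg : (0 : ℝ) ≤ (2 * n + 1) * (1 + (2 * n) ^ 2) := by positivity
  rw [grayF_eq_of_one_le hn, hcoeff]
  nlinarith [mul_le_mul_of_nonneg_left hy hcoeff_nonneg]

end

/-- Case `ε = 0`, `s = 0`, `n ≥ 4`: the polynomial `F` has a real root `c > 1`. -/
theorem stmt_19 (n : ℕ) (hn : 4 ≤ n) (F : ℝ → ℝ)
    (hF : ∀ c : ℝ, F c =
      (1 + c) * (1 - c ^ (2 * n + 1)) * (2 * (n : ℝ) - 1)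
        + (1 + c ^ 3) * (c ^ (2 * n - 1) - 1) * (2 * (n : ℝ) + 1)) :
    ∃ c : ℝ, 1 < c ∧ F c = 0 := by
  obtain rfl : F = grayF n := funext hF
  have h2n : (2 : ℝ) ≤ 2 * n := by
    have : (4 : ℝ) ≤ n := by exact_mod_cast hn
    linarith
  obtain ⟨c, hc, hroot⟩ := intermediate_value_Ioo h2n (continuous_grayF n).continuousOn
    ⟨grayF_two_neg hn, grayF_two_mul_pos (by omega)⟩
  exact ⟨c, by linarith [hc.1], hroot⟩
end
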